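/- Let D be a coassociative counital coalgebra over a field k. For any right D-comodule N and any finitely copresented right D-comodule L, the functor N ↦ N* = Hom_k(N,k) and the forgetful functor from left D-contramodules to left D*-modules induce isomorphisms of Hom spaces Hom_{D^op}(N, L) ≅ Hom^D(L*, N*) ≅ Hom_{D*}(L*, N*), where the three Hom spaces are taken in the categories of right D-comodules, left D-contramodules, and left D*-modules, respectively. -/

import Mathlib

open TensorProduct LinearMap

section Contra

variable (k : Type) [Field k]
variable (D : Type) [AddCommGroup D] [Module k D] [Coalgebra k D]

/-- Axioms for a left `D`-contramodule structure given by a contraaction map `π`. -/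
structure IsContra {P : Type} [AddCommGroup P] [Module k P]
    (π : (D →ₗ[k] P) →ₗ[k] P) : Prop where
  contraassoc : ∀ f : D ⊗[k] D →ₗ[k] P,
    π (f ∘ₗ CoalgebraStruct.comul (R := k) (A := D)) = π (π ∘ₗ TensorProduct.curry f)
  contraunit : ∀ p : P,
    π ((CoalgebraStruct.counit (R := k) (A := D)).smulRight p) = p

/-- A `k`-linear map between contramodules is a contramodule morphism. -/
def IsContraHom {P Q : Type} [AddCommGroup P] [Module k P] [AddCommGroup Q] [Module k Q]
    (πP : (D →ₗ[k] P) →ₗ[k] P) (πQ : (D →ₗ[k] Q) →ₗ[k] Q) (f : P →ₗ[k] Q) : Prop :=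
  ∀ g : D →ₗ[k] P, f (πP g) = πQ (f ∘ₗ g)

/-- The contraaction of the free left contramodule `Hom_k(D, V)`. -/
noncomputable def freeContraaction (V : Type) [AddCommGroup V] [Module k V] :
    (D →ₗ[k] (D →ₗ[k] V)) →ₗ[k] (D →ₗ[k] V) :=
  (LinearMap.lcomp k V (CoalgebraStruct.comul (R := k) (A := D))) ∘ₗ
    TensorProduct.uncurry (RingHom.id k) D D V

/-- A contramodule is finitely generated if it is a quotient of a free contramodule
with a finite-dimensional space of generators. -/
def FinGenContra {P : Type} [AddCommGroup P] [Module k P]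
    (π : (D →ₗ[k] P) →ₗ[k] P) : Prop :=
  ∃ (V : Type) (_ : AddCommGroup V) (_ : Module k V), FiniteDimensional k V ∧
    ∃ g : (D →ₗ[k] V) →ₗ[k] P, Function.Surjective g ∧
      IsContraHom k D (freeContraaction k D V) π g

end Contra

open TensorProduct LinearMap

section RightComod

variable (k : Type) [Field k]
variable (D : Type) [AddCommGroup D] [Module k D] [Coalgebra k D]

/-- Axioms for a right `D`-comodule structure given by a coaction map `ρ`. -/
structure IsRightComod {N : Type} [AddCommGroup N] [Module k N]
    (ρ : N →ₗ[k] N ⊗[k] D) : Prop where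
  coassoc : ∀ n : N, (TensorProduct.assoc k N D D) (ρ.rTensor D (ρ n)) =
      (CoalgebraStruct.comul (R := k) (A := D)).lTensor N (ρ n)
  counit : ∀ n : N, (TensorProduct.rid k N)
      ((CoalgebraStruct.counit (R := k) (A := D)).lTensor N (ρ n)) = n

/-- Morphisms of right `D`-comodules. -/
def IsRightComodHom {N N' : Type} [AddCommGroup N] [Module k N]
    [AddCommGroup N'] [Module k N']
    (ρN : N →ₗ[k] N ⊗[k] D) (ρN' : N' →ₗ[k] N' ⊗[k] D) (f : N →ₗ[k] N') : Prop :=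
  f.rTensor D ∘ₗ ρN = ρN' ∘ₗ f

/-- The coaction of the cofree right comodule `V ⊗ D`. -/
noncomputable def cofreeRightCoaction (V : Type) [AddCommGroup V] [Module k V] :
    V ⊗[k] D →ₗ[k] (V ⊗[k] D) ⊗[k] D :=
  (TensorProduct.assoc k V D D).symm.toLinearMap ∘ₗ
    (CoalgebraStruct.comul (R := k) (A := D)).lTensor V

/-- A right comodule is finitely cogenerated if it admits an injective comodule
morphism into a cofree right comodule with finite-dimensional cogenerators. -/
def FinCogenRight {N : Type} [AddCommGroup N] [Module k N]
    (ρ : N →ₗ[k] N ⊗[k] D) : Prop :=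
  ∃ (V : Type) (_ : AddCommGroup V) (_ : Module k V), FiniteDimensional k V ∧
    ∃ f : N →ₗ[k] V ⊗[k] D, Function.Injective f ∧
      IsRightComodHom k D ρ (cofreeRightCoaction k D V) f

/-- A right comodule is finitely copresented if it is (isomorphic to) the kernel of a
morphism of finitely cogenerated cofree right comodules. -/
def FinCopresRight {N : Type} [AddCommGroup N] [Module k N]
    (ρ : N →ₗ[k] N ⊗[k] D) : Prop :=
  ∃ (V : Type) (_ : AddCommGroup V) (_ : Module k V)
    (W : Type) (_ : AddCommGroup W) (_ : Module k W),
    FiniteDimensional k V ∧ FiniteDimensional k W ∧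
    ∃ g : V ⊗[k] D →ₗ[k] W ⊗[k] D,
      IsRightComodHom k D (cofreeRightCoaction k D V) (cofreeRightCoaction k D W) g ∧
      ∃ e : N →ₗ[k] V ⊗[k] D, Function.Injective e ∧
        IsRightComodHom k D ρ (cofreeRightCoaction k D V) e ∧
        LinearMap.range e = LinearMap.ker g

/-- The canonical left `D`-contraaction on the dual vector space `N* = Hom_k(N, k)`
of a right `D`-comodule `N`. -/
noncomputable def dualContraaction {N : Type} [AddCommGroup N] [Module k N]
    (ρ : N →ₗ[k] N ⊗[k] D) :
    (D →ₗ[k] (N →ₗ[k] k)) →ₗ[k] (N →ₗ[k] k) :=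
  (LinearMap.lcomp k k ρ) ∘ₗ (TensorProduct.uncurry (RingHom.id k) N D k) ∘ₗ (LinearMap.lflip).toLinearMap

/-- The dualization map on morphisms, `φ ↦ φ* = Hom_k(φ, k)`. -/
noncomputable def dualizationMap {N N' : Type} [AddCommGroup N] [Module k N]
    [AddCommGroup N'] [Module k N'] (φ : N →ₗ[k] N') :
    (N' →ₗ[k] k) →ₗ[k] (N →ₗ[k] k) :=
  LinearMap.lcomp k k φ

end RightComod

open TensorProduct LinearMap

section DAct

variable (k : Type) [Field k]
variable (D : Type) [AddCommGroup D] [Module k D] [Coalgebra k D]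

/-- The underlying left `D* = Hom_k(D,k)`-module structure of a left `D`-contramodule:
the action of a linear functional `f : D → k` on `p` is `π(d ↦ f(d)·p)`. -/
noncomputable def dAction {P : Type} [AddCommGroup P] [Module k P]
    (π : (D →ₗ[k] P) →ₗ[k] P) (f : D →ₗ[k] k) (p : P) : P :=
  π (f.smulRight p)

end DAct

/-! Choose a comodule embedding `e : L → V ⊗ D` with `V` finite-dimensional. Every functional
`ξ` on `V ⊗ D` is the contraaction of the family `d ↦ ξ (· ⊗ d)` of functionals on `V`, and a
`D*`-linear map preserves contraactions of families with values in a finite-dimensional space.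
Hence a `D*`-linear `ψ : L* → N*` is determined by `ψ ∘ e*` on `V* ⊆ (V ⊗ D)*`, which is the
dual of a linear map `f : N → V` since `V` is finite-dimensional; the comodule morphism
`(f ⊗ 1) ∘ ρN : N → V ⊗ D` then has dual `ψ ∘ e*`. Over a field this forces it to factor
through `e` as a comodule morphism `φ` with `φ* = ψ`. -/

section Dualization

variable {k : Type} [Field k]

lemma dualizationMap_eq_dualMap {N N' : Type} [AddCommGroup N] [Module k N]
    [AddCommGroup N'] [Module k N'] (φ : N →ₗ[k] N') : dualizationMap k φ = φ.dualMap := rfl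

lemma dualizationMap_injective {N N' : Type} [AddCommGroup N] [Module k N]
    [AddCommGroup N'] [Module k N'] :
    Function.Injective (dualizationMap k : (N →ₗ[k] N') → _) := by
  intro φ₁ φ₂ h
  ext n
  refine Module.eval_apply_injective k (LinearMap.ext fun η => ?_)
  exact LinearMap.congr_fun (LinearMap.congr_fun h η) n

lemma exists_dualizationMap_eq {N V : Type} [AddCommGroup N] [Module k N]
    [AddCommGroup V] [Module k V] [FiniteDimensional k V]
    (a : (V →ₗ[k] k) →ₗ[k] (N →ₗ[k] k)) : ∃ f : N →ₗ[k] V, dualizationMap k f = a :=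
  ⟨(Module.evalEquiv k V).symm.toLinearMap ∘ₗ a.dualMap ∘ₗ Module.Dual.eval k N, by
    ext v' n; simp [dualizationMap_eq_dualMap]⟩

lemma exists_lift_of_dualizationMap_eq_comp {L M N : Type} [AddCommGroup L] [Module k L]
    [AddCommGroup M] [Module k M] [AddCommGroup N] [Module k N]
    {e : L →ₗ[k] M} (he : Function.Injective e) {φ₀ : N →ₗ[k] M}
    {ψ : (L →ₗ[k] k) →ₗ[k] (N →ₗ[k] k)} (h : dualizationMap k φ₀ = ψ ∘ₗ dualizationMap k e) :
    ∃ φ : N →ₗ[k] L, e ∘ₗ φ = φ₀ ∧ dualizationMap k φ = ψ := by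
  obtain ⟨r, hr⟩ := e.exists_leftInverse_of_injective (LinearMap.ker_eq_bot.mpr he)
  have hφ : dualizationMap k (r ∘ₗ φ₀) = ψ := by
    simp only [dualizationMap_eq_dualMap] at h ⊢
    rw [← LinearMap.dualMap_comp_dualMap, h, LinearMap.comp_assoc,
      LinearMap.dualMap_comp_dualMap, hr, LinearMap.dualMap_id, LinearMap.comp_id]
  refine ⟨r ∘ₗ φ₀, dualizationMap_injective ?_, hφ⟩
  simp only [dualizationMap_eq_dualMap] at h hφ ⊢
  rw [← LinearMap.dualMap_comp_dualMap, hφ, h]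

lemma comp_eq_sum_smulRight {D U P : Type} [AddCommGroup D] [Module k D]
    [AddCommGroup U] [Module k U] [AddCommGroup P] [Module k P] {ι : Type} [Fintype ι]
    (b : Module.Basis ι k U) (h : D →ₗ[k] U) (T : U →ₗ[k] P) :
    T ∘ₗ h = ∑ i, (b.coord i ∘ₗ h).smulRight (T (b i)) := by
  ext d
  simp only [LinearMap.comp_apply, LinearMap.sum_apply, LinearMap.smulRight_apply,
    Module.Basis.coord_apply]
  conv_lhs => rw [← b.sum_repr (h d), map_sum]
  simp only [map_smul]

section Comodule

variable {D : Type} [AddCommGroup D] [Module k D]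

lemma IsRightComodHom.rTensor_apply {N N' : Type} [AddCommGroup N] [Module k N]
    [AddCommGroup N'] [Module k N'] {ρ : N →ₗ[k] N ⊗[k] D} {ρ' : N' →ₗ[k] N' ⊗[k] D}
    {φ : N →ₗ[k] N'} (hφ : IsRightComodHom k D ρ ρ' φ) (n : N) :
    φ.rTensor D (ρ n) = ρ' (φ n) :=
  LinearMap.congr_fun hφ n

lemma isContraHom_dualizationMap {N L : Type} [AddCommGroup N] [Module k N]
    [AddCommGroup L] [Module k L] {ρN : N →ₗ[k] N ⊗[k] D} {ρL : L →ₗ[k] L ⊗[k] D}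
    {φ : N →ₗ[k] L} (hφ : IsRightComodHom k D ρN ρL φ) :
    IsContraHom k D (dualContraaction k D ρL) (dualContraaction k D ρN)
      (dualizationMap k φ) := by
  intro g
  ext n
  have hcomp : uncurry (.id k) N D k (dualizationMap k φ ∘ₗ g).flip =
      uncurry (.id k) L D k g.flip ∘ₗ φ.rTensor D := by
    ext n d; rfl
  change uncurry (.id k) L D k g.flip (ρL (φ n)) =
    uncurry (.id k) N D k (dualizationMap k φ ∘ₗ g).flip (ρN n)
  rw [hcomp, LinearMap.comp_apply, hφ.rTensor_apply]

lemma IsContraHom.map_dAction {P Q : Type} [AddCommGroup P] [Module k P]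
    [AddCommGroup Q] [Module k Q] {πP : (D →ₗ[k] P) →ₗ[k] P} {πQ : (D →ₗ[k] Q) →ₗ[k] Q}
    {ψ : P →ₗ[k] Q} (hψ : IsContraHom k D πP πQ ψ) (f : D →ₗ[k] k) (p : P) :
    ψ (dAction k D πP f p) = dAction k D πQ f (ψ p) := by
  rw [dAction, hψ, dAction]
  congr 1
  exact LinearMap.ext fun d => map_smul ψ (f d) p

lemma IsRightComodHom.of_comp_injective {N L M : Type} [AddCommGroup N] [Module k N]
    [AddCommGroup L] [Module k L] [AddCommGroup M] [Module k M]
    {ρN : N →ₗ[k] N ⊗[k] D} {ρL : L →ₗ[k] L ⊗[k] D} {ρM : M →ₗ[k] M ⊗[k] D}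
    {e : L →ₗ[k] M} (he : Function.Injective e) (heHom : IsRightComodHom k D ρL ρM e)
    {φ : N →ₗ[k] L} (hφ : IsRightComodHom k D ρN ρM (e ∘ₗ φ)) :
    IsRightComodHom k D ρN ρL φ := by
  ext n
  apply Module.Flat.rTensor_preserves_injective_linearMap (M := D) e he
  rw [LinearMap.comp_apply, ← LinearMap.comp_apply (e.rTensor D), ← LinearMap.rTensor_comp,
    LinearMap.comp_apply, hφ.rTensor_apply, heHom.rTensor_apply]; rfl

lemma map_contraaction_comp_of_finiteDimensional {P Q U : Type} [AddCommGroup P] [Module k P]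
    [AddCommGroup Q] [Module k Q] [AddCommGroup U] [Module k U] [FiniteDimensional k U]
    {πP : (D →ₗ[k] P) →ₗ[k] P} {πQ : (D →ₗ[k] Q) →ₗ[k] Q} {T : P →ₗ[k] Q}
    (hT : ∀ (f : D →ₗ[k] k) (p : P), T (dAction k D πP f p) = dAction k D πQ f (T p))
    (j : U →ₗ[k] P) (h : D →ₗ[k] U) :
    T (πP (j ∘ₗ h)) = πQ ((T ∘ₗ j) ∘ₗ h) := by
  let b := Module.finBasis k U
  rw [comp_eq_sum_smulRight b h j, comp_eq_sum_smulRight b h (T ∘ₗ j), map_sum, map_sum, map_sum]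
  exact Finset.sum_congr rfl fun i _ => hT _ _

lemma dualContraaction_dualizationMap_comp {N V : Type} [AddCommGroup N] [Module k N]
    [AddCommGroup V] [Module k V] (ρN : N →ₗ[k] N ⊗[k] D) (f : N →ₗ[k] V)
    (ξ : V ⊗[k] D →ₗ[k] k) :
    dualContraaction k D ρN (dualizationMap k f ∘ₗ (curry ξ).flip) =
      ξ ∘ₗ f.rTensor D ∘ₗ ρN := by
  have hcomp : uncurry (.id k) N D k (dualizationMap k f ∘ₗ (curry ξ).flip).flip =
      ξ ∘ₗ f.rTensor D := by
    ext n d; rfl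
  ext n
  exact LinearMap.congr_fun hcomp (ρN n)

end Comodule

section Coalgebra

variable {D : Type} [AddCommGroup D] [Module k D] [Coalgebra k D]

lemma isRightComodHom_rTensor_comp {N V : Type} [AddCommGroup N] [Module k N]
    [AddCommGroup V] [Module k V] {ρN : N →ₗ[k] N ⊗[k] D} (hN : IsRightComod k D ρN)
    (f : N →ₗ[k] V) :
    IsRightComodHom k D ρN (cofreeRightCoaction k D V) (f.rTensor D ∘ₗ ρN) := by
  have hassoc : (f.rTensor D).rTensor D ∘ₗ (TensorProduct.assoc k N D D).symm.toLinearMap =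
      (TensorProduct.assoc k V D D).symm.toLinearMap ∘ₗ f.rTensor (D ⊗[k] D) := by
    ext; rfl
  have hcomul : f.rTensor (D ⊗[k] D) ∘ₗ (Coalgebra.comul (R := k) (A := D)).lTensor N =
      (Coalgebra.comul (R := k) (A := D)).lTensor V ∘ₗ f.rTensor D := by
    rw [LinearMap.rTensor_comp_lTensor, LinearMap.lTensor_comp_rTensor]
  ext n
  have hco : ρN.rTensor D (ρN n) =
      (TensorProduct.assoc k N D D).symm
        ((Coalgebra.comul (R := k) (A := D)).lTensor N (ρN n)) := by
    rw [← hN.coassoc, LinearEquiv.symm_apply_apply]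
  calc (f.rTensor D ∘ₗ ρN).rTensor D (ρN n)
      = ((f.rTensor D).rTensor D ∘ₗ (TensorProduct.assoc k N D D).symm.toLinearMap)
          ((Coalgebra.comul (R := k) (A := D)).lTensor N (ρN n)) := by
        rw [LinearMap.rTensor_comp, LinearMap.comp_apply, hco]; rfl
    _ = cofreeRightCoaction k D V (f.rTensor D (ρN n)) := by
        rw [hassoc, LinearMap.comp_apply, ← LinearMap.comp_apply (f.rTensor _), hcomul]; rfl

variable (D) in
noncomputable def dualTensorCounit (V : Type) [AddCommGroup V] [Module k V] :
    (V →ₗ[k] k) →ₗ[k] (V ⊗[k] D →ₗ[k] k) :=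
  dualizationMap k
    ((TensorProduct.rid k V).toLinearMap ∘ₗ (Coalgebra.counit (R := k) (A := D)).lTensor V)

lemma dualContraaction_cofree_dualTensorCounit_comp {V : Type} [AddCommGroup V] [Module k V]
    (ξ : V ⊗[k] D →ₗ[k] k) :
    dualContraaction k D (cofreeRightCoaction k D V)
      (dualTensorCounit D V ∘ₗ (curry ξ).flip) = ξ := by
  ext v d
  have hcounit : uncurry (.id k) (V ⊗[k] D) D k (dualTensorCounit D V ∘ₗ (curry ξ).flip).flip ∘ₗ
        (TensorProduct.assoc k V D D).symm.toLinearMap ∘ₗ TensorProduct.mk k V (D ⊗[k] D) v =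
      curry ξ v ∘ₗ (TensorProduct.lid k D).toLinearMap ∘ₗ
        (Coalgebra.counit (R := k) (A := D)).rTensor D := by
    ext d₁ d₂
    simp [dualTensorCounit, dualizationMap]
  have hd := LinearMap.congr_fun hcounit (Coalgebra.comul d)
  simp only [LinearMap.comp_apply, Coalgebra.rTensor_counit_comul] at hd
  simpa [dualContraaction, cofreeRightCoaction] using hd

lemma FinCopresRight.finCogenRight {L : Type} [AddCommGroup L] [Module k L]
    {ρL : L →ₗ[k] L ⊗[k] D} (hL : FinCopresRight k D ρL) : FinCogenRight k D ρL := by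
  obtain ⟨V, _, _, _, _, _, hV, _, _, _, e, he, heHom, _⟩ := hL
  exact ⟨V, _, _, hV, e, he, heHom⟩

lemma exists_isRightComodHom_dualizationMap_eq {N L : Type} [AddCommGroup N] [Module k N]
    [AddCommGroup L] [Module k L] {ρN : N →ₗ[k] N ⊗[k] D} (hN : IsRightComod k D ρN)
    {ρL : L →ₗ[k] L ⊗[k] D} (hL : FinCogenRight k D ρL)
    {ψ : (L →ₗ[k] k) →ₗ[k] (N →ₗ[k] k)}
    (hψ : ∀ (f : D →ₗ[k] k) (p : L →ₗ[k] k),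
      ψ (dAction k D (dualContraaction k D ρL) f p) =
        dAction k D (dualContraaction k D ρN) f (ψ p)) :
    ∃ φ : N →ₗ[k] L, IsRightComodHom k D ρN ρL φ ∧ dualizationMap k φ = ψ := by
  obtain ⟨V, _, _, _, e, he, heHom⟩ := hL
  obtain ⟨f, hf⟩ := exists_dualizationMap_eq (ψ ∘ₗ dualizationMap k e ∘ₗ dualTensorCounit D V)
  have hdual : dualizationMap k (f.rTensor D ∘ₗ ρN) = ψ ∘ₗ dualizationMap k e := by
    ext1 ξ
    calc ξ ∘ₗ f.rTensor D ∘ₗ ρN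
        = dualContraaction k D ρN (dualizationMap k f ∘ₗ (curry ξ).flip) :=
          (dualContraaction_dualizationMap_comp ρN f ξ).symm
      _ = dualContraaction k D ρN ((ψ ∘ₗ dualizationMap k e ∘ₗ dualTensorCounit D V) ∘ₗ
            (curry ξ).flip) := by rw [hf]
      _ = ψ (dualContraaction k D ρL
            ((dualizationMap k e ∘ₗ dualTensorCounit D V) ∘ₗ (curry ξ).flip)) :=
          (map_contraaction_comp_of_finiteDimensional hψ _ _).symm
      _ = ψ (dualizationMap k e ξ) := by
          rw [LinearMap.comp_assoc, ← isContraHom_dualizationMap heHom,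
            dualContraaction_cofree_dualTensorCounit_comp]
  obtain ⟨φ, heφ, hφ⟩ := exists_lift_of_dualizationMap_eq_comp he hdual
  refine ⟨φ, IsRightComodHom.of_comp_injective he heHom ?_, hφ⟩
  rw [heφ]
  exact isRightComodHom_rTensor_comp hN f

end Coalgebra

end Dualization

theorem hom_dualization_bijections_general
    (k : Type) [Field k]
    (D : Type) [AddCommGroup D] [Module k D] [Coalgebra k D]
    (N : Type) [AddCommGroup N] [Module k N]
    (ρN : N →ₗ[k] N ⊗[k] D) (hN : IsRightComod k D ρN)
    (L : Type) [AddCommGroup L] [Module k L]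
    (ρL : L →ₗ[k] L ⊗[k] D)
    (hLcp : FinCopresRight k D ρL) :
    (∀ φ : N →ₗ[k] L, IsRightComodHom k D ρN ρL φ →
      IsContraHom k D (dualContraaction k D ρL) (dualContraaction k D ρN)
        (dualizationMap k φ)) ∧
    (∀ ψ : (L →ₗ[k] k) →ₗ[k] (N →ₗ[k] k),
      IsContraHom k D (dualContraaction k D ρL) (dualContraaction k D ρN) ψ →
        ∃! φ : N →ₗ[k] L, IsRightComodHom k D ρN ρL φ ∧ dualizationMap k φ = ψ) ∧
    (∀ ψ : (L →ₗ[k] k) →ₗ[k] (N →ₗ[k] k),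
      IsContraHom k D (dualContraaction k D ρL) (dualContraaction k D ρN) ψ ↔
        ∀ (f : D →ₗ[k] k) (p : L →ₗ[k] k),
          ψ (dAction k D (dualContraaction k D ρL) f p) =
            dAction k D (dualContraaction k D ρN) f (ψ p)) := by
  have hL := hLcp.finCogenRight
  refine ⟨fun φ hφ => isContraHom_dualizationMap hφ, fun ψ hψ => ?_,
    fun ψ => ⟨IsContraHom.map_dAction, fun hψ => ?_⟩⟩
  · obtain ⟨φ, hφ, rfl⟩ := exists_isRightComodHom_dualizationMap_eq hN hL hψ.map_dAction
    exact ⟨φ, ⟨hφ, rfl⟩, fun φ' hφ' => dualizationMap_injective hφ'.2⟩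
  · obtain ⟨φ, hφ, rfl⟩ := exists_isRightComodHom_dualizationMap_eq hN hL hψ
    exact isContraHom_dualizationMap hφ

/-- Proposition 1.8(b): for any right `D`-comodule `N` and any finitely copresented
right `D`-comodule `L`, the dualization functor `X ↦ X* = Hom_k(X, k)` and the
forgetful functor from left `D`-contramodules to left `D*`-modules induce
isomorphisms of Hom spaces
`Hom_{D^op}(N, L) ≅ Hom^D(L*, N*) ≅ Hom_{D*}(L*, N*)`:
(1) the dual of a comodule morphism is a contramodule morphism;
(2) dualization is a bijection from comodule morphisms `N → L` onto contramodule
    morphisms `L* → N*`;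
(3) a linear map `L* → N*` is a contramodule morphism if and only if it commutes with
    the underlying `D*`-actions, i.e. is a morphism of `D*`-modules. -/
theorem hom_dualization_bijections
    (k : Type) [Field k]
    (D : Type) [AddCommGroup D] [Module k D] [Coalgebra k D]
    (N : Type) [AddCommGroup N] [Module k N]
    (ρN : N →ₗ[k] N ⊗[k] D) (hN : IsRightComod k D ρN)
    (L : Type) [AddCommGroup L] [Module k L]
    (ρL : L →ₗ[k] L ⊗[k] D) (hL : IsRightComod k D ρL)
    (hLcp : FinCopresRight k D ρL) :
    (∀ φ : N →ₗ[k] L, IsRightComodHom k D ρN ρL φ →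
      IsContraHom k D (dualContraaction k D ρL) (dualContraaction k D ρN)
        (dualizationMap k φ)) ∧
    (∀ ψ : (L →ₗ[k] k) →ₗ[k] (N →ₗ[k] k),
      IsContraHom k D (dualContraaction k D ρL) (dualContraaction k D ρN) ψ →
        ∃! φ : N →ₗ[k] L, IsRightComodHom k D ρN ρL φ ∧ dualizationMap k φ = ψ) ∧
    (∀ ψ : (L →ₗ[k] k) →ₗ[k] (N →ₗ[k] k),
      IsContraHom k D (dualContraaction k D ρL) (dualContraaction k D ρN) ψ ↔
        ∀ (f : D →ₗ[k] k) (p : L →ₗ[k] k),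
          ψ (dAction k D (dualContraaction k D ρL) f p) =
            dAction k D (dualContraaction k D ρN) f (ψ p)) :=
  hom_dualization_bijections_general k D N ρN hN L ρL hLcp
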